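/- Let T > 0 and C > 0. Let f¹, f² : [0,T] × ℝ → ℝ be continuous functions such that |f¹(s,y) − f¹(s,y')| ≤ C|y − y'| for all s ∈ [0,T] and y, y' ∈ ℝ, and f¹(s,y) ≥ f²(s,y) for all s, y. Let ε > 0 and ξ¹, ξ² ∈ ℝ with ξ¹ − ξ² ≥ ε. If Y¹ is a backward solution on [0,T] with terminal value ξ¹ driven by f¹, and Y² is a backward solution on [0,T] with terminal value ξ² driven by f², then Y¹_t − Y²_t ≥ ε·e^{−C(T−t)} for all t ∈ [0,T]; in particular Y¹_t > Y²_t for every t. -/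

import Mathlib

/-!
In reversed time `u = T - t` the difference `G u = Y¹_{T-u} - Y²_{T-u}` starts at `ξ¹ - ξ² ≥ ε`
and satisfies `G' = f¹(·, Y¹) - f²(·, Y²) ≥ f¹(·, Y¹) - f¹(·, Y²) ≥ -C |G|`. For every `C' > C`
the curve `ε e^{-C'u}` is then a strict lower fence for `G`: where they touch, `G > 0` and
`G' ≥ -C G > -C' G`. Letting `C' ↓ C` gives the bound.
-/

open intervalIntegral

/-- `Y` is a (backward) solution on `[0,T]` with terminal value `ξ` of the equation
driven by `f`: a continuous function satisfying `Y_t = ξ + ∫_t^T f(s, Y_s) ds`. -/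
def IsBackwardSolution (T : ℝ) (f : ℝ → ℝ → ℝ) (ξ : ℝ) (Y : ℝ → ℝ) : Prop :=
  ContinuousOn Y (Set.Icc 0 T) ∧
    ∀ t ∈ Set.Icc 0 T, Y t = ξ + ∫ s in t..T, f s (Y s)

open Set Filter Topology Real

theorem mul_exp_neg_mul_le_of_hasDerivWithinAt_of_lt {G G' : ℝ → ℝ} {b C C' ε : ℝ}
    (hε : 0 < ε) (hCC' : C < C') (hG : ContinuousOn G (Icc 0 b))
    (hG' : ∀ u ∈ Ico 0 b, HasDerivWithinAt G (G' u) (Ici u) u)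
    (hbound : ∀ u ∈ Ico 0 b, -(C * |G u|) ≤ G' u) (h0 : ε ≤ G 0) :
    ∀ u ∈ Icc 0 b, ε * exp (-(C' * u)) ≤ G u := by
  intro u hu
  have hB : ∀ x, HasDerivAt (fun x => -(ε * exp (-(C' * x)))) (C' * (ε * exp (-(C' * x)))) x :=
    fun x => (((hasDerivAt_id' x).const_mul C').fun_neg.exp.const_mul ε).fun_neg.congr_deriv
      (by ring)
  have hfence := image_le_of_deriv_right_lt_deriv_boundary (f := fun x => -G x) hG.neg
    (fun x hx => (hG' x hx).neg) (by simpa using h0) hB (fun x hx hcontact => ?_) hu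
  · simpa using hfence
  have hGx : G x = ε * exp (-(C' * x)) := neg_inj.mp hcontact
  have hpos : 0 < G x := hGx ▸ mul_pos hε (exp_pos _)
  have hG'x := hbound x hx
  rw [abs_of_pos hpos] at hG'x
  rw [← hGx]
  linarith [mul_lt_mul_of_pos_right hCC' hpos]

theorem mul_exp_neg_mul_le_of_hasDerivWithinAt {G G' : ℝ → ℝ} {b C ε : ℝ}
    (hε : 0 < ε) (hG : ContinuousOn G (Icc 0 b))
    (hG' : ∀ u ∈ Ico 0 b, HasDerivWithinAt G (G' u) (Ici u) u)
    (hbound : ∀ u ∈ Ico 0 b, -(C * |G u|) ≤ G' u) (h0 : ε ≤ G 0) :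
    ∀ u ∈ Icc 0 b, ε * exp (-(C * u)) ≤ G u := by
  intro u hu
  have hlim : Tendsto (fun C' => ε * exp (-(C' * u))) (𝓝[>] C) (𝓝 (ε * exp (-(C * u)))) :=
    ((by fun_prop : Continuous fun C' => ε * exp (-(C' * u))).tendsto C).mono_left
      nhdsWithin_le_nhds
  exact le_of_tendsto hlim <| eventually_nhdsWithin_of_forall fun C' hC' =>
    mul_exp_neg_mul_le_of_hasDerivWithinAt_of_lt hε hC' hG hG' hbound h0 u hu

theorem mapsTo_const_sub_Icc (T : ℝ) : MapsTo (T - ·) (Icc 0 T) (Icc 0 T) :=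
  fun s hs => ⟨by linarith [hs.2], by linarith [hs.1]⟩

namespace IsBackwardSolution

variable {T ξ : ℝ} {f : ℝ → ℝ → ℝ} {Y : ℝ → ℝ}

theorem apply_right (hY : IsBackwardSolution T f ξ Y) (hT : 0 ≤ T) : Y T = ξ := by
  simpa using hY.2 T ⟨hT, le_rfl⟩

theorem hasDerivWithinAt (hY : IsBackwardSolution T f ξ Y)
    (hf : ContinuousOn (Function.uncurry f) (Icc 0 T ×ˢ univ)) {t : ℝ} (ht : t ∈ Icc 0 T) :
    HasDerivWithinAt Y (-f t (Y t)) (Icc 0 T) t := by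
  have hT : 0 ≤ T := ht.1.trans ht.2
  have hfY : ContinuousOn (fun s => f s (Y s)) (Icc 0 T) :=
    hf.comp (continuousOn_id.prodMk hY.1) fun s hs => ⟨hs, mem_univ _⟩
  -- A continuous extension of the integrand to `ℝ` lets the FTC apply up to the endpoints.
  set g := IccExtend hT (domRestrict (Icc 0 T) fun s => f s (Y s))
  have hg : Continuous g := (continuousOn_iff_continuous_domRestrict.mp hfY).Icc_extend'
  have hgY : ∀ s ∈ Icc 0 T, g s = f s (Y s) := fun s hs => IccExtend_of_mem _ _ hs
  have hYg : ∀ s ∈ Icc 0 T, Y s = ξ + ∫ r in s..T, g r := fun s hs => by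
    rw [hY.2 s hs, integral_congr fun r hr => hgY r (uIcc_subset_Icc hs ⟨hT, le_rfl⟩ hr)]
  have hderiv := ((integral_hasStrictDerivAt_left (hg.intervalIntegrable t T)
    (hg.stronglyMeasurableAtFilter _ _) hg.continuousAt).hasDerivAt.const_add ξ).hasDerivWithinAt
      (s := Icc 0 T)
  rw [hgY t ht] at hderiv
  exact hderiv.congr hYg (hYg t ht)

theorem hasDerivWithinAt_const_sub (hY : IsBackwardSolution T f ξ Y)
    (hf : ContinuousOn (Function.uncurry f) (Icc 0 T ×ˢ univ)) {u : ℝ} (hu : u ∈ Ico 0 T) :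
    HasDerivWithinAt (fun u => Y (T - u)) (f (T - u) (Y (T - u))) (Ici u) u := by
  have hTu : T - u ∈ Icc 0 T := mapsTo_const_sub_Icc T (Ico_subset_Icc_self hu)
  have hderiv := (hY.hasDerivWithinAt hf hTu).comp u
    ((hasDerivAt_id u).const_sub T).hasDerivWithinAt (mapsTo_const_sub_Icc T)
  exact (hderiv.mono_of_mem_nhdsWithin (Icc_mem_nhdsGE_of_mem hu)).congr_deriv (by ring)

theorem continuousOn_const_sub (hY : IsBackwardSolution T f ξ Y) :
    ContinuousOn (fun u => Y (T - u)) (Icc 0 T) :=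
  hY.1.comp (continuousOn_const.sub continuousOn_id) (mapsTo_const_sub_Icc T)

end IsBackwardSolution

theorem backward_comparison_general
    (T C : ℝ)
    (f₁ f₂ : ℝ → ℝ → ℝ)
    (hf₁cont : ContinuousOn (Function.uncurry f₁) (Set.Icc 0 T ×ˢ Set.univ))
    (hf₂cont : ContinuousOn (Function.uncurry f₂) (Set.Icc 0 T ×ˢ Set.univ))
    (hf₁Lip : ∀ s ∈ Set.Icc 0 T, ∀ y y' : ℝ, |f₁ s y - f₁ s y'| ≤ C * |y - y'|)
    (hcomp : ∀ s ∈ Set.Icc 0 T, ∀ y : ℝ, f₁ s y ≥ f₂ s y)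
    (ε : ℝ) (hε : 0 < ε)
    (ξ₁ ξ₂ : ℝ) (hξ : ξ₁ - ξ₂ ≥ ε)
    (Y₁ Y₂ : ℝ → ℝ)
    (hY₁ : IsBackwardSolution T f₁ ξ₁ Y₁)
    (hY₂ : IsBackwardSolution T f₂ ξ₂ Y₂) :
    ∀ t ∈ Set.Icc 0 T,
      Y₁ t - Y₂ t ≥ ε * Real.exp (-(C * (T - t))) ∧ Y₁ t > Y₂ t := by
  intro t ht
  have hT : 0 ≤ T := ht.1.trans ht.2
  have hdrift : ∀ s ∈ Icc 0 T, -(C * |Y₁ s - Y₂ s|) ≤ f₁ s (Y₁ s) - f₂ s (Y₂ s) := fun s hs => by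
    linarith [hcomp s hs (Y₂ s), hf₁Lip s hs (Y₁ s) (Y₂ s),
      neg_abs_le (f₁ s (Y₁ s) - f₁ s (Y₂ s))]
  have hbound := mul_exp_neg_mul_le_of_hasDerivWithinAt (G := fun u => Y₁ (T - u) - Y₂ (T - u))
    hε (hY₁.continuousOn_const_sub.sub hY₂.continuousOn_const_sub)
    (fun u hu => (hY₁.hasDerivWithinAt_const_sub hf₁cont hu).sub
      (hY₂.hasDerivWithinAt_const_sub hf₂cont hu))
    (fun u hu => hdrift _ (mapsTo_const_sub_Icc T (Ico_subset_Icc_self hu)))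
    (by simpa [hY₁.apply_right hT, hY₂.apply_right hT] using hξ)
    (T - t) (mapsTo_const_sub_Icc T ht)
  simp only [sub_sub_cancel] at hbound
  exact ⟨hbound, by linarith [mul_pos hε (exp_pos (-(C * (T - t))))]⟩

/-- Comparison theorem (deterministic case): if `f¹ ≥ f²`, `f¹` is Lipschitz in `y`
with constant `C`, and the terminal values satisfy `ξ¹ − ξ² ≥ ε > 0`, then
`Y¹_t − Y²_t ≥ ε e^{−C(T−t)} > 0` for all `t ∈ [0,T]`. -/
theorem backward_comparison
    (T C : ℝ) (hT : 0 < T) (hC : 0 < C)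
    (f₁ f₂ : ℝ → ℝ → ℝ)
    (hf₁cont : ContinuousOn (Function.uncurry f₁) (Set.Icc 0 T ×ˢ Set.univ))
    (hf₂cont : ContinuousOn (Function.uncurry f₂) (Set.Icc 0 T ×ˢ Set.univ))
    (hf₁Lip : ∀ s ∈ Set.Icc 0 T, ∀ y y' : ℝ, |f₁ s y - f₁ s y'| ≤ C * |y - y'|)
    (hcomp : ∀ s ∈ Set.Icc 0 T, ∀ y : ℝ, f₁ s y ≥ f₂ s y)
    (ε : ℝ) (hε : 0 < ε)
    (ξ₁ ξ₂ : ℝ) (hξ : ξ₁ - ξ₂ ≥ ε)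
    (Y₁ Y₂ : ℝ → ℝ)
    (hY₁ : IsBackwardSolution T f₁ ξ₁ Y₁)
    (hY₂ : IsBackwardSolution T f₂ ξ₂ Y₂) :
    ∀ t ∈ Set.Icc 0 T,
      Y₁ t - Y₂ t ≥ ε * Real.exp (-(C * (T - t))) ∧ Y₁ t > Y₂ t :=
  backward_comparison_general T C f₁ f₂ hf₁cont hf₂cont hf₁Lip hcomp ε hε ξ₁ ξ₂ hξ Y₁ Y₂ hY₁ hY₂
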